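/- Let c > 0 and b be real with b > c², let x ∈ ℝ with 0 < x < c, and let y ∈ ℝ. Set A = x + iy and λ = ½(A − c + √((A + c)² − 4b)), where √ is the principal square root. Then Re λ = 0 if and only if y² = (b − cx)(c − x)²/(cx). -/

import Mathlib

/-!
Since `Re √w = √((|w| + Re w)/2)` and `Re λ = (x − c + Re √w)/2`, the condition `Re λ = 0` says
`Re √w = c − x > 0`. Squaring twice turns this into `(Im w)² = 4r²(r² − Re w)` with `r = c − x`,
and for `w = (A + c)² − 4b` this is the stated identity after dividing by `16cx`.
-/

/-- The principal square root on `ℂ`: the square root with nonnegative real part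
(and nonnegative imaginary part when the real part is zero). -/
noncomputable def csqrt (z : ℂ) : ℂ := z ^ (1 / 2 : ℂ)

lemma csqrt_re (z : ℂ) : (csqrt z).re = √((‖z‖ + z.re) / 2) := by
  rw [csqrt, one_div, Complex.cpow_inv_two_re]

/-- Positivity of `r` forces `Re z ≤ r²`, so no sign is lost when squaring `‖z‖ = 2r² − Re z`. -/
lemma csqrt_re_eq_iff {z : ℂ} {r : ℝ} (hr : 0 < r) :
    (csqrt z).re = r ↔ z.im ^ 2 = 4 * r ^ 2 * (r ^ 2 - z.re) := by
  have hnorm : ‖z‖ ^ 2 = z.re ^ 2 + z.im ^ 2 := by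
    rw [Complex.sq_norm, Complex.normSq_apply]; ring
  have hre := abs_le.1 (Complex.abs_re_le_norm z)
  rw [csqrt_re, Real.sqrt_eq_iff_eq_sq (by linarith [norm_nonneg z]) hr.le]
  constructor
  · intro h
    have : ‖z‖ = 2 * r ^ 2 - z.re := by linarith
    rw [this] at hnorm
    linear_combination -hnorm
  · intro h
    have hle : 0 ≤ r ^ 2 - z.re :=
      nonneg_of_mul_nonneg_right (h ▸ sq_nonneg z.im) (by positivity)
    have hpos : 0 ≤ 2 * r ^ 2 - z.re := by linarith [sq_nonneg r]
    have : ‖z‖ = 2 * r ^ 2 - z.re :=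
      (pow_left_inj₀ (norm_nonneg z) hpos two_ne_zero).1 (by linear_combination hnorm + h)
    linarith

theorem stmt18_general (b c : ℝ) (x y : ℝ)
    (hx0 : 0 < x) (hxc : x < c) :
    let A : ℂ := (x : ℂ) + (y : ℂ) * Complex.I
    let lam : ℂ := (A - (c : ℂ) + csqrt ((A + (c : ℂ)) ^ 2 - 4 * (b : ℂ))) / 2
    (lam.re = 0 ↔ y ^ 2 = (b - c * x) * (c - x) ^ 2 / (c * x)) := by
  intro A lam
  have hlam : lam.re = 0 ↔ (csqrt ((A + c) ^ 2 - 4 * b)).re = c - x := by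
    simp only [lam, A, Complex.div_ofNat_re, Complex.add_re, Complex.sub_re, Complex.ofReal_re,
      Complex.mul_re, Complex.I_re, Complex.ofReal_im, Complex.I_im]
    constructor <;> intro h <;> linarith
  have hw : (A + c) ^ 2 - 4 * b = ⟨(x + c) ^ 2 - y ^ 2 - 4 * b, 2 * (x + c) * y⟩ := by
    apply Complex.ext
    · simp [A, sq]
    · simp [A, sq]; ring
  have hcx : c * x ≠ 0 := (mul_pos (hx0.trans hxc) hx0).ne'
  rw [hlam, hw, csqrt_re_eq_iff (sub_pos.2 hxc), eq_div_iff hcx]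
  constructor <;> intro h
  · linear_combination h / 16
  · linear_combination 16 * h

/-- For `c > 0`, `b > c²`, `0 < x < c`, `A = x + iy` and
`λ = ½(A − c + √((A+c)² − 4b))`: `Re λ = 0` iff `y² = (b − cx)(c − x)²/(cx)`. -/
theorem stmt18 (b c : ℝ) (hc : 0 < c) (hb : c ^ 2 < b) (x y : ℝ)
    (hx0 : 0 < x) (hxc : x < c) :
    let A : ℂ := (x : ℂ) + (y : ℂ) * Complex.I
    let lam : ℂ := (A - (c : ℂ) + csqrt ((A + (c : ℂ)) ^ 2 - 4 * (b : ℂ))) / 2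
    (lam.re = 0 ↔ y ^ 2 = (b - c * x) * (c - x) ^ 2 / (c * x)) :=
  stmt18_general b c x y hx0 hxc
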